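/- arXiv:2104.04773 — 5 statements merged into one kernel-verified Lean document; each statement's English description precedes it below -/
import Mathlib

section
/- Let (Ω, ℱ, Q) be a probability space, 𝒢 ⊆ ℱ a sub-σ-algebra, L : Ω → [0,∞) a Q-integrable function with ∫ L dQ = 1, and let P be the probability measure with density L with respect to Q (that is, P = Q.withDensity L). Then for every f : Ω → ℝ that is P-integrable, the Bayes formula holds Q-almost everywhere: E^P[f | 𝒢] · E^Q[L | 𝒢] = E^Q[f·L | 𝒢]. -/
open MeasureTheory ProbabilityTheory

/-! By uniqueness of conditional expectation it suffices that `P[f | 𝒢] · Q[L | 𝒢]` has the same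
integrals as `f L` over the sets of `𝒢`. Writing `g = P[f | 𝒢]`, pulling `g` out of
`Q[g L | 𝒢]` and moving set integrals between `P` and `Q` via `dP = L dQ` gives
`∫_s g Q[L | 𝒢] dQ = ∫_s g L dQ = ∫_s g dP = ∫_s f dP = ∫_s f L dQ`. -/

namespace MeasureTheory

variable {Ω : Type*} {mΩ : MeasurableSpace Ω} {Q : Measure Ω} {L : Ω → ℝ}

lemma integrable_withDensity_ofReal_iff (hL : AEMeasurable L Q) (hL_nonneg : 0 ≤ᵐ[Q] L)
    {g : Ω → ℝ} :
    Integrable g (Q.withDensity fun ω => ENNReal.ofReal (L ω)) ↔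
      Integrable (fun ω => g ω * L ω) Q := by
  rw [integrable_withDensity_iff_integrable_smul₀' hL.ennreal_ofReal
    (ae_of_all _ fun _ => ENNReal.ofReal_lt_top)]
  refine integrable_congr ?_
  filter_upwards [hL_nonneg] with ω hω
  rw [ENNReal.toReal_ofReal hω, smul_eq_mul, mul_comm]

lemma setIntegral_withDensity_ofReal (hL : AEMeasurable L Q) (hL_nonneg : 0 ≤ᵐ[Q] L)
    (g : Ω → ℝ) {s : Set Ω} (hs : MeasurableSet s) :
    ∫ ω in s, g ω ∂Q.withDensity (fun ω => ENNReal.ofReal (L ω)) = ∫ ω in s, g ω * L ω ∂Q := by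
  rw [setIntegral_withDensity_eq_setIntegral_toReal_smul₀ hL.ennreal_ofReal.restrict
    (ae_of_all _ fun _ => ENNReal.ofReal_lt_top) g hs]
  refine setIntegral_congr_ae hs ?_
  filter_upwards [hL_nonneg] with ω hω _
  rw [ENNReal.toReal_ofReal hω, smul_eq_mul, mul_comm]

theorem condExp_withDensity_mul_condExp {m : MeasurableSpace Ω} (hm : m ≤ mΩ)
    [SigmaFinite (Q.trim hm)] (hL_nonneg : 0 ≤ᵐ[Q] L) (hL_int : Integrable L Q) {f : Ω → ℝ}
    (hf : Integrable f (Q.withDensity fun ω => ENNReal.ofReal (L ω))) :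
    (Q.withDensity fun ω => ENNReal.ofReal (L ω))[f|m] * Q[L|m] =ᵐ[Q]
      Q[fun ω => f ω * L ω|m] := by
  set P := Q.withDensity fun ω => ENNReal.ofReal (L ω)
  have : IsFiniteMeasure P := isFiniteMeasure_withDensity_ofReal hL_int.2
  have hL := hL_int.aemeasurable
  set g := P[f|m]
  have hfL : Integrable (fun ω => f ω * L ω) Q :=
    (integrable_withDensity_ofReal_iff hL hL_nonneg).1 hf
  have hgL : Integrable (g * L) Q :=
    (integrable_withDensity_ofReal_iff hL hL_nonneg).1 integrable_condExp
  have h_pull : Q[g * L|m] =ᵐ[Q] g * Q[L|m] :=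
    condExp_mul_of_stronglyMeasurable_left stronglyMeasurable_condExp hgL hL_int
  refine ae_eq_condExp_of_forall_setIntegral_eq hm hfL
    (fun s _ _ => (integrable_condExp.congr h_pull).integrableOn) (fun s hs _ => ?_)
    (stronglyMeasurable_condExp.mul stronglyMeasurable_condExp).aestronglyMeasurable
  have hs' : MeasurableSet[mΩ] s := hm s hs
  calc ∫ ω in s, (g * Q[L|m]) ω ∂Q
      = ∫ ω in s, Q[g * L|m] ω ∂Q := setIntegral_congr_ae hs' (h_pull.mono fun _ h _ => h.symm)
    _ = ∫ ω in s, g ω * L ω ∂Q := setIntegral_condExp hm hgL hs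
    _ = ∫ ω in s, g ω ∂P := (setIntegral_withDensity_ofReal hL hL_nonneg g hs').symm
    _ = ∫ ω in s, f ω ∂P := setIntegral_condExp hm hf hs
    _ = ∫ ω in s, f ω * L ω ∂Q := setIntegral_withDensity_ofReal hL hL_nonneg f hs'

end MeasureTheory

theorem bayes_formula_condexp_general
    {Ω : Type*} {mΩ : MeasurableSpace Ω} {Q : Measure Ω} [IsProbabilityMeasure Q]
    (L : Ω → ℝ) (hL_nonneg : ∀ ω, 0 ≤ L ω) (hL_int : Integrable L Q)
    (P : Measure Ω) (hP : P = Q.withDensity (fun ω => ENNReal.ofReal (L ω)))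
    (𝒢 : MeasurableSpace Ω) (h𝒢 : 𝒢 ≤ mΩ)
    (f : Ω → ℝ) (hf : Integrable f P) :
    ∀ᵐ ω ∂Q, (P[f|𝒢]) ω * (Q[L|𝒢]) ω = (Q[fun ω => f ω * L ω|𝒢]) ω := by
  subst hP
  exact condExp_withDensity_mul_condExp h𝒢 (ae_of_all _ hL_nonneg) hL_int hf

/-- Bayes formula for conditional expectations: if `dP = L dQ` then
`E^P[f | 𝒢] · E^Q[L | 𝒢] = E^Q[f·L | 𝒢]` holds `Q`-a.e. -/
theorem bayes_formula_condexp
    {Ω : Type*} {mΩ : MeasurableSpace Ω} {Q : Measure Ω} [IsProbabilityMeasure Q]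
    (L : Ω → ℝ) (hL_nonneg : ∀ ω, 0 ≤ L ω) (hL_int : Integrable L Q)
    (hL_one : ∫ ω, L ω ∂Q = 1)
    (P : Measure Ω) (hP : P = Q.withDensity (fun ω => ENNReal.ofReal (L ω)))
    (𝒢 : MeasurableSpace Ω) (h𝒢 : 𝒢 ≤ mΩ)
    (f : Ω → ℝ) (hf : Integrable f P) :
    ∀ᵐ ω ∂Q, (P[f|𝒢]) ω * (Q[L|𝒢]) ω = (Q[fun ω => f ω * L ω|𝒢]) ω :=
  bayes_formula_condexp_general L hL_nonneg hL_int P hP 𝒢 h𝒢 f hf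
end

section
/- Let (Ω, ℱ, Q) be a probability space, 𝒰 and 𝒪 measurable spaces, and U : Ω → 𝒰, Y : Ω → 𝒪 measurable maps that are independent under Q, with μ_U = Q ∘ U⁻¹ the distribution of U. Let L : 𝒰 × 𝒪 → [0,∞) be measurable with E^Q[L(U,Y)] = 1, and let P be the probability measure with dP = L(U,Y) dQ. Let f : 𝒰 × 𝒪 → ℝ be measurable with f(U,Y)·L(U,Y) Q-integrable. Then P-almost surely, ∫_𝒰 L(u, Y) μ_U(du) > 0 and E^P[f(U,Y) | σ(Y)] = ( ∫_𝒰 f(u,Y) L(u,Y) μ_U(du) ) / ( ∫_𝒰 L(u,Y) μ_U(du) ). -/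
/-!
Under `Q` the joint law of `(U, Y)` is `μ_U ⊗ μ_Y`, so by Fubini, integrating `F (U, Y)` over
`{Y ∈ A}` is integrating `y ↦ ∫ F (u, y) μ_U(du)` over `A` against `μ_Y`. With `F = L` this says
that the law of `Y` under `P` has density `g y = ∫ L (u, y) μ_U(du)` with respect to `μ_Y`, so
`g (Y) > 0` holds `P`-a.s. With `F = f L` it says that `h (Y) / g (Y)`, where
`h y = ∫ f (u, y) L (u, y) μ_U(du)`, has the same `P`-integrals as `f (U, Y)` over every set
`{Y ∈ A}`, which characterizes it as the conditional expectation.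
-/

open MeasureTheory ProbabilityTheory

section

variable {α : Type*} {mα : MeasurableSpace α} {μ : Measure α} {ρ : α → ℝ}

lemma integrable_withDensity_ofReal_iff (hρ : Measurable ρ) (hρ₀ : 0 ≤ ρ) {r : α → ℝ} :
    Integrable r (μ.withDensity fun x => ENNReal.ofReal (ρ x)) ↔
      Integrable (fun x => r x * ρ x) μ := by
  rw [integrable_withDensity_iff hρ.ennreal_ofReal (.of_forall fun _ => ENNReal.ofReal_lt_top)]
  simp only [ENNReal.toReal_ofReal (hρ₀ _)]

lemma setIntegral_withDensity_ofReal (hρ : Measurable ρ) (hρ₀ : 0 ≤ ρ) {s : Set α}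
    (hs : MeasurableSet s) (r : α → ℝ) :
    ∫ x in s, r x ∂(μ.withDensity fun x => ENNReal.ofReal (ρ x)) = ∫ x in s, ρ x * r x ∂μ := by
  rw [setIntegral_withDensity_eq_setIntegral_toReal_smul hρ.ennreal_ofReal
    (.of_forall fun _ => ENNReal.ofReal_lt_top) r hs]
  simp only [ENNReal.toReal_ofReal (hρ₀ _), smul_eq_mul]

lemma integral_mul_eq_zero_of_integral_eq_zero {L : α → ℝ} (f : α → ℝ) (hL₀ : 0 ≤ L)
    (hL : Integrable L μ) (h : ∫ x, L x ∂μ = 0) : ∫ x, f x * L x ∂μ = 0 := by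
  have hL0 : L =ᵐ[μ] 0 := (integral_eq_zero_iff_of_nonneg hL₀ hL).mp h
  exact integral_eq_zero_of_ae (hL0.mono fun x hx => by simp [hx])

end

namespace ProbabilityTheory.IndepFun

variable {Ω 𝒰 𝒪 E : Type*} {mΩ : MeasurableSpace Ω} {m𝒰 : MeasurableSpace 𝒰}
  {m𝒪 : MeasurableSpace 𝒪} [NormedAddCommGroup E]
  {Q : Measure Ω} [IsFiniteMeasure Q] {U : Ω → 𝒰} {Y : Ω → 𝒪}

lemma map_prodMk_eq_prod_map (hUY : IndepFun U Y Q) (hU : Measurable U) (hY : Measurable Y) :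
    Q.map (fun ω => (U ω, Y ω)) = (Q.map U).prod (Q.map Y) :=
  (indepFun_iff_map_prod_eq_prod_map_map hU.aemeasurable hY.aemeasurable).mp hUY

lemma integrable_comp_prodMk_iff (hUY : IndepFun U Y Q) (hU : Measurable U) (hY : Measurable Y)
    {F : 𝒰 × 𝒪 → E} (hF : AEStronglyMeasurable F ((Q.map U).prod (Q.map Y))) :
    Integrable (fun ω => F (U ω, Y ω)) Q ↔ Integrable F ((Q.map U).prod (Q.map Y)) := by
  rw [← hUY.map_prodMk_eq_prod_map hU hY] at hF ⊢
  exact (integrable_map_measure hF (hU.prodMk hY).aemeasurable).symm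

lemma setIntegral_preimage_comp_prodMk [NormedSpace ℝ E] [CompleteSpace E] (hUY : IndepFun U Y Q)
    (hU : Measurable U) (hY : Measurable Y) {F : 𝒰 × 𝒪 → E}
    (hF : AEStronglyMeasurable F ((Q.map U).prod (Q.map Y)))
    (hFint : Integrable (fun ω => F (U ω, Y ω)) Q) {A : Set 𝒪} (hA : MeasurableSet A) :
    ∫ ω in Y ⁻¹' A, F (U ω, Y ω) ∂Q = ∫ y in A, ∫ u, F (u, y) ∂(Q.map U) ∂(Q.map Y) := by
  have hFprod := (hUY.integrable_comp_prodMk_iff hU hY hF).mp hFint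
  have hpre : (fun ω => (U ω, Y ω)) ⁻¹' (Set.univ ×ˢ A) = Y ⁻¹' A := by ext; simp
  have hrestrict : (Q.map U).prod ((Q.map Y).restrict A)
      = ((Q.map U).prod (Q.map Y)).restrict (Set.univ ×ˢ A) := by
    rw [← Measure.prod_restrict, Measure.restrict_univ]
  rw [← hpre, ← setIntegral_map (MeasurableSet.univ.prod hA)
    (hUY.map_prodMk_eq_prod_map hU hY ▸ hF) (hU.prodMk hY).aemeasurable,
    hUY.map_prodMk_eq_prod_map hU hY, ← hrestrict,
    integral_prod_symm _ (hrestrict ▸ hFprod.restrict)]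

lemma setLIntegral_preimage_comp_prodMk (hUY : IndepFun U Y Q) (hU : Measurable U)
    (hY : Measurable Y) {F : 𝒰 × 𝒪 → ENNReal} (hF : Measurable F) {A : Set 𝒪}
    (hA : MeasurableSet A) :
    ∫⁻ ω in Y ⁻¹' A, F (U ω, Y ω) ∂Q = ∫⁻ y in A, ∫⁻ u, F (u, y) ∂(Q.map U) ∂(Q.map Y) := by
  have hpre : (fun ω => (U ω, Y ω)) ⁻¹' (Set.univ ×ˢ A) = Y ⁻¹' A := by ext; simp
  rw [← hpre, ← setLIntegral_map (MeasurableSet.univ.prod hA) hF (hU.prodMk hY),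
    hUY.map_prodMk_eq_prod_map hU hY, ← Measure.prod_restrict, Measure.restrict_univ,
    lintegral_prod_symm' _ hF]

lemma map_withDensity_comp_prodMk (hUY : IndepFun U Y Q) (hU : Measurable U) (hY : Measurable Y)
    {ρ : 𝒰 × 𝒪 → ENNReal} (hρ : Measurable ρ) :
    (Q.withDensity fun ω => ρ (U ω, Y ω)).map Y
      = (Q.map Y).withDensity fun y => ∫⁻ u, ρ (u, y) ∂(Q.map U) := by
  ext A hA
  rw [Measure.map_apply hY hA, withDensity_apply _ (hY hA), withDensity_apply _ hA,
    hUY.setLIntegral_preimage_comp_prodMk hU hY hρ hA]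

variable {L : 𝒰 × 𝒪 → ℝ}

lemma map_withDensity_ofReal_comp_prodMk (hUY : IndepFun U Y Q) (hU : Measurable U)
    (hY : Measurable Y) (hL : Measurable L) (hL₀ : 0 ≤ L)
    (hLint : Integrable (fun ω => L (U ω, Y ω)) Q) :
    (Q.withDensity fun ω => ENNReal.ofReal (L (U ω, Y ω))).map Y
      = (Q.map Y).withDensity fun y => ENNReal.ofReal (∫ u, L (u, y) ∂(Q.map U)) := by
  rw [hUY.map_withDensity_comp_prodMk hU hY hL.ennreal_ofReal]
  refine withDensity_congr_ae ?_
  filter_upwards [((hUY.integrable_comp_prodMk_iff hU hY hL.aestronglyMeasurable).mp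
    hLint).prod_left_ae] with y hy
  exact (ofReal_integral_eq_lintegral_ofReal hy (.of_forall fun _ => hL₀ _)).symm

lemma ae_integral_pos_withDensity (hUY : IndepFun U Y Q) (hU : Measurable U)
    (hY : Measurable Y) (hL : Measurable L) (hL₀ : 0 ≤ L)
    (hLint : Integrable (fun ω => L (U ω, Y ω)) Q) :
    ∀ᵐ ω ∂(Q.withDensity fun ω => ENNReal.ofReal (L (U ω, Y ω))),
      0 < ∫ u, L (u, Y ω) ∂(Q.map U) := by
  refine ae_of_ae_map (p := fun y => 0 < ∫ u, L (u, y) ∂(Q.map U)) hY.aemeasurable ?_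
  rw [hUY.map_withDensity_ofReal_comp_prodMk hU hY hL hL₀ hLint, ae_withDensity_iff
    (hL.stronglyMeasurable.integral_prod_left' (μ := Q.map U)).measurable.ennreal_ofReal]
  exact .of_forall fun y hy => ENNReal.ofReal_pos.mp (pos_iff_ne_zero.mpr hy)

lemma condExp_withDensity_ae_eq (hUY : IndepFun U Y Q) (hU : Measurable U)
    (hY : Measurable Y) (hL : Measurable L) (hL₀ : 0 ≤ L)
    (hLint : Integrable (fun ω => L (U ω, Y ω)) Q) {f : 𝒰 × 𝒪 → ℝ} (hf : Measurable f)
    (hfL : Integrable (fun ω => f (U ω, Y ω) * L (U ω, Y ω)) Q) :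
    (Q.withDensity fun ω => ENNReal.ofReal (L (U ω, Y ω)))[fun ω => f (U ω, Y ω) |
        MeasurableSpace.comap Y m𝒪]
      =ᵐ[Q.withDensity fun ω => ENNReal.ofReal (L (U ω, Y ω))]
      fun ω => (∫ u, f (u, Y ω) * L (u, Y ω) ∂(Q.map U)) / ∫ u, L (u, Y ω) ∂(Q.map U) := by
  set P := Q.withDensity fun ω => ENNReal.ofReal (L (U ω, Y ω))
  set g : 𝒪 → ℝ := fun y => ∫ u, L (u, y) ∂(Q.map U)
  set h : 𝒪 → ℝ := fun y => ∫ u, f (u, y) * L (u, y) ∂(Q.map U)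
  have : IsFiniteMeasure P := isFiniteMeasure_withDensity_ofReal hLint.2
  have hLUY : Measurable fun ω => L (U ω, Y ω) := hL.comp (hU.prodMk hY)
  have hg : Measurable g :=
    (hL.stronglyMeasurable.integral_prod_left' (μ := Q.map U)).measurable
  have hh : Measurable h :=
    ((hf.mul hL).stronglyMeasurable.integral_prod_left' (μ := Q.map U)).measurable
  have hhg : Measurable fun y => h y / g y := hh.div hg
  have hg₀ : 0 ≤ g := fun y => integral_nonneg fun u => hL₀ _
  have hlawY : P.map Y = (Q.map Y).withDensity fun y => ENNReal.ofReal (g y) :=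
    hUY.map_withDensity_ofReal_comp_prodMk hU hY hL hL₀ hLint
  have hcancel : ∀ᵐ y ∂(Q.map Y), h y / g y * g y = h y := by
    filter_upwards [((hUY.integrable_comp_prodMk_iff hU hY hL.aestronglyMeasurable).mp
      hLint).prod_left_ae] with y hy
    exact div_mul_cancel_of_imp (integral_mul_eq_zero_of_integral_eq_zero _ (fun u => hL₀ _) hy)
  have hdivP : Integrable (fun ω => h (Y ω) / g (Y ω)) P := by
    refine (integrable_map_measure hhg.aestronglyMeasurable hY.aemeasurable).mp ?_
    rw [hlawY, integrable_withDensity_ofReal_iff hg hg₀]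
    exact ((hUY.integrable_comp_prodMk_iff hU hY (hf.mul hL).aestronglyMeasurable).mp
      hfL).integral_prod_right.congr (hcancel.mono fun y hy => hy.symm)
  refine (ae_eq_condExp_of_forall_setIntegral_eq hY.comap_le
    ((integrable_withDensity_ofReal_iff hLUY fun _ => hL₀ _).mpr hfL)
    (fun _ _ _ => hdivP.integrableOn) ?_
    (hhg.comp (comap_measurable Y)).aestronglyMeasurable).symm
  rintro _ ⟨A, hA, rfl⟩ -
  calc ∫ ω in Y ⁻¹' A, h (Y ω) / g (Y ω) ∂P
      = ∫ y in A, g y * (h y / g y) ∂(Q.map Y) := by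
        rw [← setIntegral_map hA hhg.aestronglyMeasurable hY.aemeasurable, hlawY,
          setIntegral_withDensity_ofReal hg hg₀ hA]
    _ = ∫ y in A, h y ∂(Q.map Y) :=
        setIntegral_congr_ae hA (hcancel.mono fun y hy _ => by rw [mul_comm, hy])
    _ = ∫ ω in Y ⁻¹' A, f (U ω, Y ω) * L (U ω, Y ω) ∂Q :=
        (hUY.setIntegral_preimage_comp_prodMk hU hY (hf.mul hL).aestronglyMeasurable hfL hA).symm
    _ = ∫ ω in Y ⁻¹' A, f (U ω, Y ω) ∂P := by
        rw [setIntegral_withDensity_ofReal hLUY (fun _ => hL₀ _) (hY hA)]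
        simp_rw [mul_comm]

end ProbabilityTheory.IndepFun

/-- Static Kallianpur–Striebel formula: if `U ⫫ Y` under the reference measure `Q`
and `dP = L(U,Y) dQ`, then `P`-a.s. the normalizing factor `∫ L(u,Y) μ_U(du)` is
positive and
`E^P[f(U,Y) | σ(Y)] = (∫ f(u,Y) L(u,Y) μ_U(du)) / (∫ L(u,Y) μ_U(du))`. -/
theorem kallianpur_striebel_static
    {Ω 𝒰 𝒪 : Type*} {mΩ : MeasurableSpace Ω} {m𝒰 : MeasurableSpace 𝒰}
    {m𝒪 : MeasurableSpace 𝒪} {Q : Measure Ω} [IsProbabilityMeasure Q]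
    (U : Ω → 𝒰) (Y : Ω → 𝒪) (hU : Measurable U) (hY : Measurable Y)
    (hUY : IndepFun U Y Q)
    (L : 𝒰 × 𝒪 → ℝ) (hL_meas : Measurable L) (hL_nonneg : ∀ x, 0 ≤ L x)
    (hL_one : ∫ ω, L (U ω, Y ω) ∂Q = 1)
    (P : Measure Ω)
    (hP : P = Q.withDensity (fun ω => ENNReal.ofReal (L (U ω, Y ω))))
    (f : 𝒰 × 𝒪 → ℝ) (hf_meas : Measurable f)
    (hint : Integrable (fun ω => f (U ω, Y ω) * L (U ω, Y ω)) Q) :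
    ∀ᵐ ω ∂P,
      0 < ∫ u, L (u, Y ω) ∂(Q.map U) ∧
      (P[fun ω => f (U ω, Y ω)|MeasurableSpace.comap Y m𝒪]) ω
        = (∫ u, f (u, Y ω) * L (u, Y ω) ∂(Q.map U)) / ∫ u, L (u, Y ω) ∂(Q.map U) := by
  have hL_int : Integrable (fun ω => L (U ω, Y ω)) Q := integrable_of_integral_eq_one hL_one
  subst hP
  filter_upwards [hUY.ae_integral_pos_withDensity hU hY hL_meas hL_nonneg hL_int,
    hUY.condExp_withDensity_ae_eq hU hY hL_meas hL_nonneg hL_int hf_meas hint]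
    with ω hpos hcondExp
  exact ⟨hpos, hcondExp⟩
end

section
/- Let (Ω, ℱ, Q) be a probability space, 𝒰 and 𝒪 measurable spaces, Y : Ω → 𝒪 measurable, and U₁, U₂, … : Ω → 𝒰 an i.i.d. sequence with common distribution μ such that the family (U₁, U₂, …) is independent of σ(Y) under Q. Let g : 𝒰 × 𝒪 → ℝ be measurable with g(U₁, Y) Q-integrable. Then Q-almost surely, lim_{N→∞} (1/N) ∑_{k=1}^{N} g(U_k, Y) = ∫_𝒰 g(u, Y) μ(du). -/
open MeasureTheory ProbabilityTheory Filter Topology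

/-!
Write `ν` for the law of `Y`. Independence of the sequence `(U_k)` from `Y` makes the joint law
of `((U_k)_k, Y)` the product of the law of the sequence with `ν`, so by Fubini it suffices to
prove the convergence for `ν`-almost every frozen value `y` of the parameter. For fixed `y` the
variables `g (U_k, y)` are i.i.d. and, for `ν`-a.e. `y`, integrable, so this is the classical
strong law of large numbers.
-/

theorem MeasurableSpace.pi_comap_eq_iSup {β ι : Type*} {X : ι → Type*}
    [m : ∀ i, MeasurableSpace (X i)] (g : ∀ i, β → X i) :
    pi.comap (fun b i => g i b) = ⨆ i, (m i).comap (g i) := by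
  simp only [pi, comap_iSup, comap_comp]
  rfl

section

variable {Ω α β : Type*} {mΩ : MeasurableSpace Ω} {mα : MeasurableSpace α}
  {mβ : MeasurableSpace β} {Q : Measure Ω}

theorem ProbabilityTheory.IndepFun.ae_mem_of_ae_ae [IsFiniteMeasure Q] {X : Ω → α} {Y : Ω → β}
    (hXY : IndepFun X Y Q) (hX : AEMeasurable X Q) (hY : AEMeasurable Y Q)
    {S : Set (α × β)} (hS : MeasurableSet S) (h : ∀ᵐ y ∂Q.map Y, ∀ᵐ ω ∂Q, (X ω, y) ∈ S) :
    ∀ᵐ ω ∂Q, (X ω, Y ω) ∈ S := by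
  refine (ae_map_iff (p := (· ∈ S)) (hX.prodMk hY) hS).mp ?_
  rw [(indepFun_iff_map_prod_eq_prod_map_map hX hY).mp hXY, Measure.ae_prod_mem_iff_ae_ae_mem hS,
    Measure.ae_ae_comm (p := fun x y => (x, y) ∈ S) hS]
  filter_upwards [h] with y hy
  exact (ae_map_iff hX (measurable_prodMk_right hS)).mpr hy

theorem strong_law_ae_comp_of_map_eq {U : ℕ → Ω → α} (hU : ∀ k, AEMeasurable (U k) Q)
    (hindep : Pairwise (Function.onFun (IndepFun · · Q) U)) {μ : Measure α}
    (hdist : ∀ k, Q.map (U k) = μ)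
    {h : α → ℝ} (hh : Measurable h) (hint : Integrable h μ) :
    ∀ᵐ ω ∂Q, Tendsto (fun N : ℕ => (N : ℝ)⁻¹ * ∑ k ∈ Finset.range N, h (U k ω)) atTop
      (𝓝 (∫ u, h u ∂μ)) := by
  have hident : ∀ k, IdentDistrib (U k) (U 0) Q Q := fun k =>
    ⟨hU k, hU 0, by rw [hdist k, hdist 0]⟩
  have hint0 : Integrable (h ∘ U 0) Q := by
    rwa [← integrable_map_measure hh.aestronglyMeasurable (hU 0), hdist 0]
  have hmean : ∫ ω, (h ∘ U 0) ω ∂Q = ∫ u, h u ∂μ := by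
    rw [← hdist 0, integral_map (hU 0) hh.aestronglyMeasurable]
    rfl
  filter_upwards [strong_law_ae_real (fun k => h ∘ U k) hint0
    (fun i j hij => (hindep hij).comp hh hh) (fun k => (hident k).comp hh)] with ω hω
  rw [← hmean]
  simpa only [div_eq_inv_mul, Function.comp_apply] using hω

end

/-- Conditional strong law of large numbers with a random parameter: if
`U₁, U₂, …` are i.i.d. with law `μ` and the whole family is independent of
`σ(Y)` under `Q`, then `Q`-a.s.
`(1/N) ∑_{k<N} g(U_k, Y) → ∫ g(u, Y) μ(du)`. -/
theorem conditional_slln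
    {Ω 𝒰 𝒪 : Type*} {mΩ : MeasurableSpace Ω} {m𝒰 : MeasurableSpace 𝒰}
    {m𝒪 : MeasurableSpace 𝒪} {Q : Measure Ω} [IsProbabilityMeasure Q]
    (U : ℕ → Ω → 𝒰) (Y : Ω → 𝒪) (hU : ∀ k, Measurable (U k)) (hY : Measurable Y)
    (μ : Measure 𝒰) (hdist : ∀ k, Q.map (U k) = μ)
    (hiid : iIndepFun (m := fun _ => m𝒰) U Q)
    (hindep : Indep (⨆ k, MeasurableSpace.comap (U k) m𝒰)
      (MeasurableSpace.comap Y m𝒪) Q)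
    (g : 𝒰 × 𝒪 → ℝ) (hg : Measurable g)
    (hint : Integrable (fun ω => g (U 0 ω, Y ω)) Q) :
    ∀ᵐ ω ∂Q,
      Tendsto (fun N : ℕ => (N : ℝ)⁻¹ * ∑ k ∈ Finset.range N, g (U k ω, Y ω))
        atTop (𝓝 (∫ u, g (u, Y ω) ∂μ)) := by
  have : IsFiniteMeasure μ := hdist 0 ▸ inferInstance
  have hUseq : Measurable fun ω k => U k ω := measurable_pi_lambda _ hU
  have hindepSeq : IndepFun (fun ω k => U k ω) Y Q := by
    rwa [IndepFun_iff_Indep, MeasurableSpace.pi_comap_eq_iSup]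
  have hgint : Integrable g (μ.prod (Q.map Y)) := by
    have hindep0 : IndepFun (U 0) Y Q := hindepSeq.comp (measurable_pi_apply 0) measurable_id
    rwa [← hdist 0, ← (indepFun_iff_map_prod_eq_prod_map_map (hU 0).aemeasurable
      hY.aemeasurable).mp hindep0, integrable_map_measure hg.aestronglyMeasurable
      ((hU 0).prodMk hY).aemeasurable]
  let S : Set ((ℕ → 𝒰) × 𝒪) := {p | Tendsto
    (fun N : ℕ => (N : ℝ)⁻¹ * ∑ k ∈ Finset.range N, g (p.1 k, p.2)) atTop
    (𝓝 (∫ u, g (u, p.2) ∂μ))}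
  have hS : MeasurableSet S := measurableSet_tendsto_fun (fun N => by fun_prop)
    (hg.stronglyMeasurable.integral_prod_left'.measurable.comp measurable_snd)
  refine hindepSeq.ae_mem_of_ae_ae hUseq.aemeasurable hY.aemeasurable hS ?_
  filter_upwards [hgint.prod_left_ae] with y hy
  exact strong_law_ae_comp_of_map_eq (fun k => (hU k).aemeasurable)
    (fun i j hij => hiid.indepFun hij) hdist (hg.comp measurable_prodMk_right) hy
end

section
/- Let (Ω, ℱ, Q) be a probability space, 𝒰 and 𝒪 measurable spaces, Y : Ω → 𝒪 measurable, and U₁, U₂, … : Ω → 𝒰 an i.i.d. sequence with common distribution μ such that the family (U₁, U₂, …) is independent of σ(Y) under Q. Let L : 𝒰 × 𝒪 → [0,∞) be measurable with E^Q[L(U₁,Y)] = 1 and let P be the probability measure with dP = L(U₁,Y) dQ. Let f : 𝒰 × 𝒪 → ℝ be bounded measurable. Then P-almost surely, lim_{N→∞} ( ∑_{k=1}^{N} f(U_k,Y) L(U_k,Y) ) / ( ∑_{k=1}^{N} L(U_k,Y) ) exists and equals E^P[f(U₁,Y) | σ(Y)]. -/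
/-!
Under `Q` the particles are i.i.d. with law `μ` and independent of `Y`, so `(Y, (U k)ₖ)` has law
`law(Y) ⊗ μ^ℕ`. For a fixed observation `y`, the strong law applied to numerator and denominator
(both divided by `N`) sends the ratio to the posterior mean
`∫ f(u, y) L(u, y) dμ / ∫ L(u, y) dμ`, and Fubini makes this a `Q`-a.s., hence `P`-a.s., statement.
The limit of the denominator is `P`-a.s. positive since `P(∫ L(·, Y) dμ = 0)` is the integral of
`∫ L(·, y) dμ` over the observations where it vanishes. Finally, comparing integrals over the sets
`{Y ∈ B}` (Bayes' formula) shows that the posterior mean of `Y` is a version of the conditional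
expectation.
-/

open MeasureTheory ProbabilityTheory Filter Topology

lemma tendsto_sum_div_sum_of_tendsto_average {a b : ℕ → ℝ} {A B : ℝ}
    (ha : Tendsto (fun n : ℕ => (n : ℝ)⁻¹ * ∑ k ∈ Finset.range n, a k) atTop (𝓝 A))
    (hb : Tendsto (fun n : ℕ => (n : ℝ)⁻¹ * ∑ k ∈ Finset.range n, b k) atTop (𝓝 B))
    (hB : B ≠ 0) :
    Tendsto (fun n => (∑ k ∈ Finset.range n, a k) / ∑ k ∈ Finset.range n, b k) atTop
      (𝓝 (A / B)) := by
  refine (ha.div hb hB).congr' ?_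
  filter_upwards [eventually_ne_atTop 0] with n hn
  exact mul_div_mul_left _ _ (inv_ne_zero (Nat.cast_ne_zero.mpr hn))

section StrongLaw

variable {α : Type*} [MeasurableSpace α] {μ : Measure α} [IsProbabilityMeasure μ]

lemma ae_tendsto_average_infinitePi {G : α → ℝ} (hG : Measurable G) (hGint : Integrable G μ) :
    ∀ᵐ v ∂Measure.infinitePi (fun _ : ℕ => μ),
      Tendsto (fun n : ℕ => (n : ℝ)⁻¹ * ∑ k ∈ Finset.range n, G (v k)) atTop
        (𝓝 (∫ u, G u ∂μ)) := by
  have hlaw (k : ℕ) : (Measure.infinitePi fun _ : ℕ => μ).map (fun v => G (v k)) = μ.map G := by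
    rw [show (fun v : ℕ → α => G (v k)) = G ∘ Function.eval k from rfl,
      ← Measure.map_map hG (measurable_pi_apply k),
      (measurePreserving_eval_infinitePi _ k).map_eq]
  have hindep : iIndepFun (fun k (v : ℕ → α) => G (v k)) (Measure.infinitePi fun _ => μ) :=
    iIndepFun_infinitePi fun _ => hG
  have hint : Integrable (fun v : ℕ → α => G (v 0)) (Measure.infinitePi fun _ => μ) :=
    (measurePreserving_eval_infinitePi _ 0).integrable_comp_of_integrable hGint
  have h := strong_law_ae _ hint (fun i j hij => hindep.indepFun hij) fun k =>
    ⟨(hG.comp (measurable_pi_apply k)).aemeasurable,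
      (hG.comp (measurable_pi_apply 0)).aemeasurable, by rw [hlaw, hlaw]⟩
  have hmean : ∫ v, G (v 0) ∂Measure.infinitePi (fun _ : ℕ => μ) = ∫ u, G u ∂μ := by
    conv_rhs => rw [← (measurePreserving_eval_infinitePi (fun _ : ℕ => μ) 0).map_eq]
    exact (integral_map (measurable_pi_apply 0).aemeasurable
      hG.aestronglyMeasurable).symm
  simpa only [hmean, smul_eq_mul] using h

lemma ae_tendsto_sum_div_sum_infinitePi {w ψ : α → ℝ} (hw : Measurable w) (hψ : Measurable ψ)
    (hwint : Integrable w μ) (hψwint : Integrable (fun u => ψ u * w u) μ)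
    (hpos : 0 < ∫ u, w u ∂μ) :
    ∀ᵐ v ∂Measure.infinitePi (fun _ : ℕ => μ),
      Tendsto (fun n => (∑ k ∈ Finset.range n, ψ (v k) * w (v k)) /
          ∑ k ∈ Finset.range n, w (v k)) atTop
        (𝓝 ((∫ u, ψ u * w u ∂μ) / ∫ u, w u ∂μ)) := by
  filter_upwards [ae_tendsto_average_infinitePi (hψ.mul hw) hψwint,
    ae_tendsto_average_infinitePi hw hwint] with v hψw hw
  exact tendsto_sum_div_sum_of_tendsto_average hψw hw hpos.ne'

end StrongLaw

/-- The mean of `ψ(·, y)` under the posterior `L(u, y) μ(du) / ∫ L(·, y) dμ`; it is `0` when the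
normalizing constant vanishes. -/
noncomputable def posteriorMean {α β : Type*} [MeasurableSpace α] (μ : Measure α)
    (L ψ : α × β → ℝ) (y : β) : ℝ :=
  (∫ u, ψ (u, y) * L (u, y) ∂μ) / ∫ u, L (u, y) ∂μ

section Posterior

variable {α β : Type*} [MeasurableSpace α] {μ : Measure α} {L ψ : α × β → ℝ}

lemma measurable_posteriorMean [MeasurableSpace β] [SFinite μ] (hL : Measurable L)
    (hψ : Measurable ψ) :
    Measurable (posteriorMean μ L ψ) :=
  (hψ.mul hL).stronglyMeasurable.integral_prod_left'.measurable.div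
    hL.stronglyMeasurable.integral_prod_left'.measurable

lemma abs_posteriorMean_le {C : ℝ} (hL : ∀ p, 0 ≤ L p) (hψ : ∀ p, |ψ p| ≤ C) (hC : 0 ≤ C)
    (y : β) : |posteriorMean μ L ψ y| ≤ C := by
  rcases (integral_nonneg fun u => hL (u, y) : 0 ≤ ∫ u, L (u, y) ∂μ).eq_or_lt with h | h
  · rwa [posteriorMean, ← h, div_zero, abs_zero]
  have hint : Integrable (fun u => L (u, y)) μ := by
    by_contra hn
    rw [integral_undef hn] at h
    exact h.false
  rw [posteriorMean, abs_div, abs_of_pos h, div_le_iff₀ h, ← Real.norm_eq_abs,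
    ← integral_const_mul]
  refine norm_integral_le_of_norm_le (hint.const_mul C) (ae_of_all _ fun u => ?_)
  rw [Real.norm_eq_abs, abs_mul, abs_of_nonneg (hL _)]
  exact mul_le_mul_of_nonneg_right (hψ _) (hL _)

lemma integral_mul_posteriorMean (hL : ∀ p, 0 ≤ L p) {y : β}
    (hint : Integrable (fun u => L (u, y)) μ) :
    (∫ u, L (u, y) ∂μ) * posteriorMean μ L ψ y = ∫ u, ψ (u, y) * L (u, y) ∂μ := by
  by_cases h : ∫ u, L (u, y) ∂μ = 0
  · have hL0 := (integral_eq_zero_iff_of_nonneg (fun u => hL (u, y)) hint).mp h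
    rw [h, zero_mul, integral_eq_zero_of_ae]
    filter_upwards [hL0] with u hu
    simp [hu]
  · exact mul_div_cancel₀ _ h

lemma ae_tendsto_sum_div_sum_posteriorMean [MeasurableSpace β] [IsProbabilityMeasure μ]
    {ν : Measure β} [SFinite ν] (hL : Measurable L) (hψ : Measurable ψ)
    (hLint : Integrable L (μ.prod ν))
    (hψLint : Integrable (fun p => ψ p * L p) (μ.prod ν)) :
    ∀ᵐ p ∂ν.prod (Measure.infinitePi fun _ : ℕ => μ), 0 < ∫ u, L (u, p.1) ∂μ →
      Tendsto (fun n => (∑ k ∈ Finset.range n, ψ (p.2 k, p.1) * L (p.2 k, p.1)) /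
          ∑ k ∈ Finset.range n, L (p.2 k, p.1)) atTop (𝓝 (posteriorMean μ L ψ p.1)) := by
  have hsection (k : ℕ) : Measurable fun p : β × (ℕ → α) => (p.2 k, p.1) := by fun_prop
  rw [Measure.ae_prod_iff_ae_ae]
  · filter_upwards [hLint.prod_left_ae, hψLint.prod_left_ae] with y hLy hψLy
    by_cases hpos : 0 < ∫ u, L (u, y) ∂μ
    · filter_upwards [ae_tendsto_sum_div_sum_infinitePi (by fun_prop) (by fun_prop) hLy hψLy
        hpos] with v hv using fun _ => hv
    · exact ae_of_all _ fun _ h => absurd h hpos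
  refine MeasurableSet.imp (measurableSet_lt measurable_const ?_) (measurableSet_tendsto_fun
    (fun n => ?_) ((measurable_posteriorMean hL hψ).comp measurable_fst))
  · exact hL.stronglyMeasurable.integral_prod_left'.measurable.comp measurable_fst
  · exact (Finset.measurable_sum _ fun k _ => (hψ.mul hL).comp (hsection k)).div
      (Finset.measurable_sum _ fun k _ => hL.comp (hsection k))

end Posterior

section Bayes

variable {Ω α β : Type*} [MeasurableSpace Ω] [MeasurableSpace α] {mβ : MeasurableSpace β}
  {Q : Measure Ω} {X : Ω → α} {Y : Ω → β} {μ : Measure α} {ν : Measure β} {L ψ : α × β → ℝ}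

lemma setIntegral_preimage_withDensity [SFinite μ] [SFinite ν] (hX : Measurable X)
    (hY : Measurable Y) (hlaw : Q.map (fun ω => (X ω, Y ω)) = μ.prod ν) (hL : Measurable L)
    (hL0 : ∀ p, 0 ≤ L p) (hψ : Measurable ψ) (hint : Integrable (fun p => ψ p * L p) (μ.prod ν))
    {B : Set β} (hB : MeasurableSet B) :
    ∫ ω in Y ⁻¹' B, ψ (X ω, Y ω) ∂Q.withDensity (fun ω => ENNReal.ofReal (L (X ω, Y ω))) =
      ∫ y in B, ∫ u, ψ (u, y) * L (u, y) ∂μ ∂ν := by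
  calc _ = ∫ ω in Y ⁻¹' B, ψ (X ω, Y ω) * L (X ω, Y ω) ∂Q := by
        rw [setIntegral_withDensity_eq_setIntegral_toReal_smul (by fun_prop)
          (ae_of_all _ fun _ => ENNReal.ofReal_lt_top) _ (hY hB)]
        refine setIntegral_congr_fun (hY hB) fun ω _ => ?_
        rw [ENNReal.toReal_ofReal (hL0 _), smul_eq_mul, mul_comm]
    _ = ∫ p in Set.univ ×ˢ B, ψ p * L p ∂μ.prod ν := by
        rw [Set.univ_prod, ← hlaw]
        exact (setIntegral_map (measurable_snd hB) (hψ.mul hL).aestronglyMeasurable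
          (hX.prodMk hY).aemeasurable).symm
    _ = ∫ y in B, ∫ u, ψ (u, y) * L (u, y) ∂μ ∂ν := by
        have hrestrict : (μ.prod ν).restrict (Set.univ ×ˢ B) = μ.prod (ν.restrict B) := by
          rw [← Measure.prod_restrict, Measure.restrict_univ]
        rw [hrestrict]
        exact integral_prod_symm _ (hrestrict ▸ hint.restrict)

lemma isFiniteMeasure_withDensity_comp (hX : Measurable X) (hY : Measurable Y)
    (hlaw : Q.map (fun ω => (X ω, Y ω)) = μ.prod ν) (hL : Measurable L)
    (hLint : Integrable L (μ.prod ν)) :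
    IsFiniteMeasure (Q.withDensity fun ω => ENNReal.ofReal (L (X ω, Y ω))) := by
  rw [← hlaw] at hLint
  exact isFiniteMeasure_withDensity_ofReal
    ((integrable_map_measure hL.aestronglyMeasurable (hX.prodMk hY).aemeasurable).mp
      hLint).hasFiniteIntegral

lemma ae_withDensity_pos_integral [SFinite μ] [SFinite ν] (hX : Measurable X)
    (hY : Measurable Y) (hlaw : Q.map (fun ω => (X ω, Y ω)) = μ.prod ν) (hL : Measurable L)
    (hL0 : ∀ p, 0 ≤ L p) (hLint : Integrable L (μ.prod ν)) :
    ∀ᵐ ω ∂Q.withDensity (fun ω => ENNReal.ofReal (L (X ω, Y ω))), 0 < ∫ u, L (u, Y ω) ∂μ := by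
  have := isFiniteMeasure_withDensity_comp hX hY hlaw hL hLint
  set B := {y | ∫ u, L (u, y) ∂μ ≤ 0}
  have hB : MeasurableSet B :=
    measurableSet_le hL.stronglyMeasurable.integral_prod_left'.measurable measurable_const
  have h := setIntegral_preimage_withDensity (ψ := fun _ => 1) hX hY hlaw hL hL0
    measurable_const (by simpa only [one_mul] using hLint) hB
  simp only [setIntegral_const, smul_eq_mul, mul_one, one_mul] at h
  have hnull : ∫ y in B, ∫ u, L (u, y) ∂μ ∂ν = 0 :=
    setIntegral_eq_zero_of_forall_eq_zero fun _ hy =>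
      le_antisymm hy (integral_nonneg fun _ => hL0 _)
  rw [hnull, measureReal_eq_zero_iff] at h
  simp_rw [ae_iff, not_lt]
  exact h

theorem posteriorMean_comp_ae_eq_condExp [SFinite μ] [SFinite ν] (hX : Measurable X)
    (hY : Measurable Y) (hlaw : Q.map (fun ω => (X ω, Y ω)) = μ.prod ν) (hL : Measurable L)
    (hL0 : ∀ p, 0 ≤ L p) (hLint : Integrable L (μ.prod ν)) (hψ : Measurable ψ)
    (hψ_bdd : ∃ C, ∀ p, |ψ p| ≤ C) :
    (fun ω => posteriorMean μ L ψ (Y ω)) =ᵐ[Q.withDensity fun ω => ENNReal.ofReal (L (X ω, Y ω))]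
      (Q.withDensity fun ω => ENNReal.ofReal (L (X ω, Y ω)))[fun ω => ψ (X ω, Y ω) |
        MeasurableSpace.comap Y mβ] := by
  obtain ⟨C, hC⟩ := hψ_bdd
  have := isFiniteMeasure_withDensity_comp hX hY hlaw hL hLint
  have hmean_bdd (y : β) : |posteriorMean μ L ψ y| ≤ max C 0 :=
    abs_posteriorMean_le hL0 (fun p => (hC p).trans (le_max_left _ _)) (le_max_right _ _) y
  have hmean := measurable_posteriorMean (μ := μ) hL hψ
  have hint_mul {φ : α × β → ℝ} (hφ : Measurable φ) {c : ℝ} (hφc : ∀ p, |φ p| ≤ c) :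
      Integrable (fun p => φ p * L p) (μ.prod ν) :=
    hLint.bdd_mul hφ.aestronglyMeasurable (ae_of_all _ hφc)
  refine ae_eq_condExp_of_forall_setIntegral_eq hY.comap_le
    (.of_bound (hψ.comp (hX.prodMk hY)).aestronglyMeasurable C (ae_of_all _ fun _ => hC _))
    (fun s _ _ => (Integrable.of_bound (hmean.comp hY).aestronglyMeasurable _
      (ae_of_all _ fun ω => hmean_bdd (Y ω))).integrableOn) ?_
    (hmean.comp (comap_measurable Y)).aestronglyMeasurable
  rintro _ ⟨B, hB, rfl⟩ -
  rw [setIntegral_preimage_withDensity (ψ := fun p => posteriorMean μ L ψ p.2) hX hY hlaw hL hL0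
      (hmean.comp measurable_snd) (hint_mul (hmean.comp measurable_snd) fun p => hmean_bdd p.2) hB,
    setIntegral_preimage_withDensity hX hY hlaw hL hL0 hψ (hint_mul hψ hC) hB]
  refine setIntegral_congr_ae hB ?_
  filter_upwards [hLint.prod_left_ae] with y hy _
  rw [integral_const_mul, mul_comm, integral_mul_posteriorMean hL0 hy]

end Bayes

/-- Weighted particle (Monte Carlo) representation of a conditional expectation:
if `U₁, U₂, …` are i.i.d. with law `μ`, independent of `σ(Y)` under the
reference measure `Q`, and `dP = L(U₁,Y) dQ`, then for bounded measurable `f`,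
`P`-a.s.
`(∑_{k<N} f(U_k,Y) L(U_k,Y)) / (∑_{k<N} L(U_k,Y)) → E^P[f(U₁,Y) | σ(Y)]`. -/
theorem particle_representation_condexp
    {Ω 𝒰 𝒪 : Type*} {mΩ : MeasurableSpace Ω} {m𝒰 : MeasurableSpace 𝒰}
    {m𝒪 : MeasurableSpace 𝒪} {Q : Measure Ω} [IsProbabilityMeasure Q]
    (U : ℕ → Ω → 𝒰) (Y : Ω → 𝒪) (hU : ∀ k, Measurable (U k)) (hY : Measurable Y)
    (μ : Measure 𝒰) (hdist : ∀ k, Q.map (U k) = μ)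
    (hiid : iIndepFun (m := fun _ => m𝒰) U Q)
    (hindep : Indep (⨆ k, MeasurableSpace.comap (U k) m𝒰)
      (MeasurableSpace.comap Y m𝒪) Q)
    (L : 𝒰 × 𝒪 → ℝ) (hL_meas : Measurable L) (hL_nonneg : ∀ x, 0 ≤ L x)
    (hL_one : ∫ ω, L (U 0 ω, Y ω) ∂Q = 1)
    (P : Measure Ω)
    (hP : P = Q.withDensity (fun ω => ENNReal.ofReal (L (U 0 ω, Y ω))))
    (f : 𝒰 × 𝒪 → ℝ) (hf_meas : Measurable f) (hf_bdd : ∃ C : ℝ, ∀ x, |f x| ≤ C) :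
    ∀ᵐ ω ∂P,
      Tendsto
        (fun N : ℕ =>
          (∑ k ∈ Finset.range N, f (U k ω, Y ω) * L (U k ω, Y ω)) /
            ∑ k ∈ Finset.range N, L (U k ω, Y ω))
        atTop
        (𝓝 ((P[fun ω => f (U 0 ω, Y ω)|MeasurableSpace.comap Y m𝒪]) ω)) := by
  subst hP
  have : IsProbabilityMeasure μ :=
    hdist 0 ▸ Measure.isProbabilityMeasure_map (hU 0).aemeasurable
  have hV : Measurable fun ω k => U k ω := measurable_pi_lambda _ hU
  have hVY : IndepFun (fun ω k => U k ω) Y Q := by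
    rw [IndepFun_iff_Indep, MeasurableSpace.pi, MeasurableSpace.comap_iSup]
    simp_rw [MeasurableSpace.comap_comp]
    exact hindep
  have hlawV : Q.map (fun ω k => U k ω) = Measure.infinitePi fun _ => μ := by
    simp_rw [hiid.map_fun_eq_infinitePi_map hU, hdist]
  have hlawUY : Q.map (fun ω => (U 0 ω, Y ω)) = μ.prod (Q.map Y) := by
    rw [← hdist 0]
    exact (hVY.comp (measurable_pi_apply 0) measurable_id).map_prod_eq_prod_map_map
      (hU 0).aemeasurable hY.aemeasurable
  have hlawYV : Q.map (fun ω => (Y ω, fun k => U k ω)) =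
      (Q.map Y).prod (Measure.infinitePi fun _ => μ) := by
    rw [← hlawV]
    exact hVY.symm.map_prod_eq_prod_map_map hY.aemeasurable hV.aemeasurable
  have hLint : Integrable L (μ.prod (Q.map Y)) := by
    rw [← hlawUY, integrable_map_measure hL_meas.aestronglyMeasurable
      ((hU 0).prodMk hY).aemeasurable]
    exact Integrable.of_integral_ne_zero (hL_one ▸ one_ne_zero)
  obtain ⟨C, hC⟩ := hf_bdd
  have hconv := ae_of_ae_map (hY.prodMk hV).aemeasurable <| hlawYV ▸
    ae_tendsto_sum_div_sum_posteriorMean hL_meas hf_meas hLint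
      (hLint.bdd_mul hf_meas.aestronglyMeasurable (ae_of_all _ hC))
  filter_upwards [withDensity_absolutelyContinuous _ _ |>.ae_le hconv,
    ae_withDensity_pos_integral (hU 0) hY hlawUY hL_meas hL_nonneg hLint,
    posteriorMean_comp_ae_eq_condExp (hU 0) hY hlawUY hL_meas hL_nonneg hLint hf_meas
      ⟨C, hC⟩] with ω hconv hpos hbayes
  exact hbayes ▸ hconv hpos
end

section
/- Let E be a locally compact metric space, let (μ_n) be a sequence of Borel probability measures on E converging weakly to a Borel probability measure μ. Suppose φ : E → ℝ is continuous with φ > 0 everywhere and sup_n ∫_E φ dμ_n < ∞. Then for every continuous f : E → ℝ such that the function f/φ vanishes at infinity (f/φ ∈ C₀(E)), f is integrable with respect to each μ_n and with respect to μ, and lim_{n→∞} ∫_E f dμ_n = ∫_E f dμ. -/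
/-!
Since `f / φ` vanishes at infinity, truncating `f` at a high level gives, for every `δ > 0`, a
bounded continuous `g` with `|f - g| ≤ δ φ`. Hence on the set of probability measures with
`∫ φ ≤ C`, the map `ν ↦ ∫ f dν` is a uniform limit of the weakly continuous maps `ν ↦ ∫ g dν`,
so it is continuous there. That set is weakly closed, because `ν ↦ ∫ φ dν` is lower
semicontinuous (a supremum of the integrals of the truncations `min φ k`), so it contains `μ`.
-/

open MeasureTheory Filter Topology BoundedContinuousFunction
open scoped ENNReal NNReal

section Measurable

variable {E : Type*} [MeasurableSpace E] {ν : Measure E} {f g φ : E → ℝ} {δ : ℝ}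

lemma integrable_of_lintegral_ofReal_le (hφ : AEStronglyMeasurable φ ν) (hφ0 : 0 ≤ φ)
    {c : ℝ≥0∞} (hc : c ≠ ∞) (h : ∫⁻ x, ENNReal.ofReal (φ x) ∂ν ≤ c) : Integrable φ ν :=
  (lintegral_ofReal_ne_top_iff_integrable hφ (ae_of_all _ hφ0)).mp (ne_top_of_le_ne_top hc h)

lemma abs_integral_sub_le_of_abs_sub_le_mul (hf : Integrable f ν) (hg : Integrable g ν)
    (hφ : Integrable φ ν) (h : ∀ x, |f x - g x| ≤ δ * φ x) :
    |∫ x, f x ∂ν - ∫ x, g x ∂ν| ≤ δ * ∫ x, φ x ∂ν := by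
  rw [← integral_sub hf hg, ← integral_const_mul]
  simpa only [Real.norm_eq_abs] using
    norm_integral_le_of_norm_le (hφ.const_mul δ) (ae_of_all _ fun x =>
      (Real.norm_eq_abs (f x - g x)).trans_le (h x))

end Measurable

lemma exists_boundedContinuous_abs_sub_le_mul {E : Type*} [TopologicalSpace E] {f φ : E → ℝ}
    (hf : Continuous f) (hφ : ∀ x, 0 < φ x)
    (hvan : Tendsto (fun x => f x / φ x) (cocompact E) (𝓝 0)) {δ : ℝ} (hδ : 0 < δ) :
    ∃ g : E →ᵇ ℝ, ∀ x, |f x - g x| ≤ δ * φ x := by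
  obtain ⟨K, hK, hKc⟩ := mem_cocompact.mp (hvan (Metric.closedBall_mem_nhds 0 hδ))
  obtain ⟨B, hB0, hB⟩ :=
    (hK.image_of_continuousOn hf.continuousOn).isBounded.exists_pos_norm_le
  let g : E →ᵇ ℝ := ofNormedAddCommGroup (fun x => max (-B) (min B (f x))) (by fun_prop) B
    fun x => by rw [Real.norm_eq_abs, abs_le]; constructor <;> simp [hB0.le]
  refine ⟨g, fun x => ?_⟩
  by_cases hx : x ∈ K
  · have hfx := hB _ (Set.mem_image_of_mem f hx)
    rw [Real.norm_eq_abs, abs_le] at hfx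
    have hgx : g x = f x := by simp [g, hfx.1, hfx.2]
    rw [hgx, sub_self, abs_zero]
    exact mul_nonneg hδ.le (hφ x).le
  · have hfx : |f x| ≤ δ * φ x := by
      simpa [abs_div, abs_of_pos (hφ x), div_le_iff₀ (hφ x)] using hKc hx
    refine le_trans ?_ hfx
    simp only [g, coe_ofNormedAddCommGroup]
    grind

section Weak

variable {E : Type*} [TopologicalSpace E] [MeasurableSpace E] [OpensMeasurableSpace E]

lemma integrable_of_abs_sub_le_mul {ν : Measure E} [IsFiniteMeasure ν] {f φ : E → ℝ} {δ : ℝ}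
    (hf : AEStronglyMeasurable f ν) (g : E →ᵇ ℝ) (hφ : Integrable φ ν)
    (h : ∀ x, |f x - g x| ≤ δ * φ x) : Integrable f ν := by
  have hfg : Integrable (fun x => f x - g x) ν :=
    (hφ.const_mul δ).mono' (hf.sub g.continuous.aestronglyMeasurable) (ae_of_all _ h)
  refine (hfg.add (g.integrable ν)).congr (ae_of_all _ fun x => ?_)
  simp

namespace MeasureTheory.ProbabilityMeasure

lemma lowerSemicontinuous_lintegral {φ : E → ℝ≥0} (hφ : Continuous φ) :
    LowerSemicontinuous fun ν : ProbabilityMeasure E => ∫⁻ x, φ x ∂ν := by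
  have htrunc (k : ℕ) :
      Continuous fun ν : ProbabilityMeasure E => ∫⁻ x, (min (φ x) k : ℝ≥0) ∂ν :=
    continuous_lintegral_boundedContinuousFunction
      (mkOfBound ⟨fun x => min (φ x) k, hφ.min continuous_const⟩ k fun x y => by
        simp only [ContinuousMap.coe_mk, NNReal.dist_eq, abs_sub_le_iff, NNReal.coe_min,
          NNReal.coe_natCast]
        constructor <;> linarith [min_le_right (φ x : ℝ) k, min_le_right (φ y : ℝ) k,
          le_min (φ x).coe_nonneg k.cast_nonneg, le_min (φ y).coe_nonneg k.cast_nonneg])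
  have hsup (ν : ProbabilityMeasure E) :
      ∫⁻ x, φ x ∂ν = ⨆ k : ℕ, ∫⁻ x, (min (φ x) k : ℝ≥0) ∂ν := by
    rw [← lintegral_iSup (fun k => (hφ.min continuous_const).measurable.coe_nnreal_ennreal)
      fun k j hkj x => by simpa using Or.inr hkj]
    congr with x
    refine le_antisymm (le_iSup_of_le ⌈φ x⌉₊ ?_) (iSup_le fun k => by simp)
    rw [min_eq_left (Nat.le_ceil _)]
  simp_rw [hsup]
  exact lowerSemicontinuous_iSup fun k => (htrunc k).lowerSemicontinuous

theorem continuousOn_integral_of_forall_approx {f φ : E → ℝ}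
    (hf : Continuous f) (hφ : Continuous φ) (hφ0 : 0 ≤ φ) {c : ℝ≥0∞} (hc : c ≠ ∞)
    (happrox : ∀ δ > 0, ∃ g : E →ᵇ ℝ, ∀ x, |f x - g x| ≤ δ * φ x) :
    ContinuousOn (fun ν : ProbabilityMeasure E => ∫ x, f x ∂ν)
      {ν | ∫⁻ x, ENNReal.ofReal (φ x) ∂ν ≤ c} := by
  refine continuousOn_of_uniform_approx_of_continuousOn fun u hu => ?_
  obtain ⟨ε, hε, hεu⟩ := Metric.mem_uniformity_dist.mp hu
  obtain ⟨g, hg⟩ := happrox (ε / (c.toReal + 1)) (by positivity)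
  refine ⟨fun ν => ∫ x, g x ∂ν, (continuous_integral_boundedContinuousFunction g).continuousOn,
    fun ν hν => hεu ?_⟩
  have hφi := integrable_of_lintegral_ofReal_le hφ.aestronglyMeasurable hφ0 hc hν
  have hφc : ∫ x, φ x ∂ν ≤ c.toReal := by
    rw [integral_eq_lintegral_of_nonneg_ae (ae_of_all _ hφ0) hφ.aestronglyMeasurable]
    exact ENNReal.toReal_mono hc hν
  calc dist (∫ x, f x ∂ν) (∫ x, g x ∂ν)
      ≤ ε / (c.toReal + 1) * ∫ x, φ x ∂ν := abs_integral_sub_le_of_abs_sub_le_mul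
        (integrable_of_abs_sub_le_mul hf.aestronglyMeasurable g hφi hg) (g.integrable _) hφi hg
    _ ≤ ε / (c.toReal + 1) * c.toReal := by gcongr
    _ < ε := by
      rw [div_mul_eq_mul_div, div_lt_iff₀ (by positivity)]
      nlinarith [ENNReal.toReal_nonneg (a := c)]

end MeasureTheory.ProbabilityMeasure

end Weak

theorem weak_conv_integral_of_dominating_general
    {E : Type*} [MetricSpace E]
    [MeasurableSpace E] [BorelSpace E]
    (μn : ℕ → ProbabilityMeasure E) (μ : ProbabilityMeasure E)
    (hconv : Tendsto μn atTop (𝓝 μ))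
    (φ : E → ℝ) (hφ_cont : Continuous φ) (hφ_pos : ∀ x, 0 < φ x)
    (hφ_bdd : ∃ C : ℝ, ∀ n, ∫⁻ x, ENNReal.ofReal (φ x) ∂(μn n : Measure E)
      ≤ ENNReal.ofReal C)
    (f : E → ℝ) (hf_cont : Continuous f)
    (hf_van : Tendsto (fun x => f x / φ x) (cocompact E) (𝓝 0)) :
    (∀ n, Integrable f (μn n : Measure E)) ∧ Integrable f (μ : Measure E) ∧
      Tendsto (fun n => ∫ x, f x ∂(μn n : Measure E)) atTop
        (𝓝 (∫ x, f x ∂(μ : Measure E))) := by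
  obtain ⟨C, hC⟩ := hφ_bdd
  have hφ0 : 0 ≤ φ := fun x => (hφ_pos x).le
  have happrox (δ : ℝ) (hδ : 0 < δ) : ∃ g : E →ᵇ ℝ, ∀ x, |f x - g x| ≤ δ * φ x :=
    exists_boundedContinuous_abs_sub_le_mul hf_cont hφ_pos hf_van hδ
  set S := {ν : ProbabilityMeasure E | ∫⁻ x, ENNReal.ofReal (φ x) ∂ν ≤ ENNReal.ofReal C}
  have hμ : μ ∈ S :=
    ((ProbabilityMeasure.lowerSemicontinuous_lintegral (φ := fun x => (φ x).toNNReal)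
      (by fun_prop)).isClosed_preimage _).mem_of_tendsto hconv (Eventually.of_forall hC)
  have hint (ν : ProbabilityMeasure E) (hν : ν ∈ S) : Integrable f (ν : Measure E) := by
    obtain ⟨g, hg⟩ := happrox 1 one_pos
    have hφi := integrable_of_lintegral_ofReal_le hφ_cont.aestronglyMeasurable hφ0
      ENNReal.ofReal_ne_top hν
    exact integrable_of_abs_sub_le_mul hf_cont.aestronglyMeasurable g hφi hg
  refine ⟨fun n => hint _ (hC n), hint μ hμ, ?_⟩
  exact (ProbabilityMeasure.continuousOn_integral_of_forall_approx hf_cont hφ_cont hφ0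
    ENNReal.ofReal_ne_top happrox μ hμ).tendsto.comp
    (tendsto_nhdsWithin_iff.mpr ⟨hconv, Eventually.of_forall hC⟩)

/-- Weak convergence plus a uniform bound on the integrals of a positive
continuous `φ` allows passing to the limit for integrals of any continuous `f`
with `f/φ` vanishing at infinity (Lemma `wkext`). -/
theorem weak_conv_integral_of_dominating
    {E : Type*} [MetricSpace E] [LocallyCompactSpace E]
    [MeasurableSpace E] [BorelSpace E]
    (μn : ℕ → ProbabilityMeasure E) (μ : ProbabilityMeasure E)
    (hconv : Tendsto μn atTop (𝓝 μ))
    (φ : E → ℝ) (hφ_cont : Continuous φ) (hφ_pos : ∀ x, 0 < φ x)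
    (hφ_bdd : ∃ C : ℝ, ∀ n, ∫⁻ x, ENNReal.ofReal (φ x) ∂(μn n : Measure E)
      ≤ ENNReal.ofReal C)
    (f : E → ℝ) (hf_cont : Continuous f)
    (hf_van : Tendsto (fun x => f x / φ x) (cocompact E) (𝓝 0)) :
    (∀ n, Integrable f (μn n : Measure E)) ∧ Integrable f (μ : Measure E) ∧
      Tendsto (fun n => ∫ x, f x ∂(μn n : Measure E)) atTop
        (𝓝 (∫ x, f x ∂(μ : Measure E))) :=
  weak_conv_integral_of_dominating_general μn μ hconv φ hφ_cont hφ_pos hφ_bdd f hf_cont hf_van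
end
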